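/- A polynomial translation surface r(u,v) = (u, v, f(u) + g(v)) with f, g polynomials is a Weingarten surface (Jacobian of (H,K) vanishes identically) if and only if it is a cylinder (f or g has degree ≤ 1) or, up to translation, a paraboloid of revolution z = a(u−u₀)² + a(v−v₀)² with a ≠ 0. -/

import Mathlib

open Polynomial

/-- The mean curvature of the translation surface `r(u,v) = (u,v,f(u)+g(v))`, `α = f'`, `β = g'`. -/
noncomputable def meanCurv (α β : ℝ → ℝ) (u v : ℝ) : ℝ :=
  ((1 + β v ^ 2) * deriv α u + (1 + α u ^ 2) * deriv β v) /
    (2 * (1 + α u ^ 2 + β v ^ 2) ^ ((3 : ℝ) / 2))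

/-- The Gaussian curvature of the translation surface. -/
noncomputable def gaussCurv (α β : ℝ → ℝ) (u v : ℝ) : ℝ :=
  deriv α u * deriv β v / (1 + α u ^ 2 + β v ^ 2) ^ 2

/-- The Jacobian `∂(H,K)/∂(u,v)` of the curvatures. -/
noncomputable def jacobianHK (α β : ℝ → ℝ) (u v : ℝ) : ℝ :=
  deriv (fun x => meanCurv α β x v) u * deriv (fun y => gaussCurv α β u y) v -
    deriv (fun y => meanCurv α β u y) v * deriv (fun x => gaussCurv α β x v) u

/-!
Write `A, A₁, A₂` for `f', f'', f'''` at `u`, `B, B₁, B₂` for `g', g'', g'''` at `v`, and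
`W = 1 + A² + B²`. Differentiating `H` and `K` shows that the Jacobian is
`weingartenNum A A₁ A₂ B B₁ B₂ / (2 W^(11/2))`, so the Weingarten condition is the polynomial
identity `weingartenNum = 0`.

Let `deg f = k + 2` and let `c` be the leading coefficient of `f'`. For fixed `v` the identity
holds in `ℝ[u]`, and its coefficient of `u^(7k+5)` is `(k+1)(2k+3) c⁷ B₁ B₂`; hence
`g'' g''' = 0`. If also `deg g ≥ 2`, then `g'' ≠ 0`, so `g''' = 0` and `deg g = 2`. By the
antisymmetry of `weingartenNum` the same holds for `f`. For two quadratics the numerator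
reduces to `8 A B A₁² B₁² W (A₁ - B₁)`, which vanishes identically exactly when the leading
coefficients agree.
-/

section Numerators

variable {R : Type*} [CommRing R]

def meanCurvDerivNum (A A₁ A₂ B B₁ : R) : R :=
  ((1 + B ^ 2) * A₂ + 2 * A * A₁ * B₁) * (1 + A ^ 2 + B ^ 2) -
    3 * A * A₁ * ((1 + B ^ 2) * A₁ + (1 + A ^ 2) * B₁)

def gaussCurvDerivNum (A A₁ A₂ B B₁ : R) : R :=
  B₁ * (A₂ * (1 + A ^ 2 + B ^ 2) - 4 * A * A₁ ^ 2)

def weingartenNum (A A₁ A₂ B B₁ B₂ : R) : R :=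
  meanCurvDerivNum A A₁ A₂ B B₁ * gaussCurvDerivNum B B₁ B₂ A A₁ -
    meanCurvDerivNum B B₁ B₂ A A₁ * gaussCurvDerivNum A A₁ A₂ B B₁

lemma weingartenNum_swap (A A₁ A₂ B B₁ B₂ : R) :
    weingartenNum B B₁ B₂ A A₁ A₂ = -weingartenNum A A₁ A₂ B B₁ B₂ := by
  simp only [weingartenNum]; ring

lemma map_weingartenNum {S : Type*} [CommRing S] (φ : R →+* S) (A A₁ A₂ B B₁ B₂ : R) :
    φ (weingartenNum A A₁ A₂ B B₁ B₂) =
      weingartenNum (φ A) (φ A₁) (φ A₂) (φ B) (φ B₁) (φ B₂) := by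
  simp only [weingartenNum, meanCurvDerivNum, gaussCurvDerivNum, map_sub, map_mul, map_add,
    map_pow, map_one, map_ofNat]

lemma weingartenNum_of_linear_left (A B B₁ B₂ : R) : weingartenNum A 0 0 B B₁ B₂ = 0 := by
  simp only [weingartenNum, meanCurvDerivNum, gaussCurvDerivNum]; ring

lemma weingartenNum_of_quadratic (A A₁ B B₁ : R) :
    weingartenNum A A₁ 0 B B₁ 0 =
      8 * A * B * A₁ ^ 2 * B₁ ^ 2 * (1 + A ^ 2 + B ^ 2) * (A₁ - B₁) := by
  simp only [weingartenNum, meanCurvDerivNum, gaussCurvDerivNum]; ring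

end Numerators

section Derivatives

variable {α α' α'' : ℝ → ℝ}

lemma meanCurv_comm (α β : ℝ → ℝ) (u v : ℝ) : meanCurv α β u v = meanCurv β α v u := by
  simp only [meanCurv, add_right_comm _ (α u ^ 2)]
  ring_nf

lemma gaussCurv_comm (α β : ℝ → ℝ) (u v : ℝ) : gaussCurv α β u v = gaussCurv β α v u := by
  simp only [gaussCurv, add_right_comm _ (α u ^ 2), mul_comm (deriv α u)]

lemma hasDerivAt_meanCurv (hα : ∀ x, HasDerivAt α (α' x) x) (hα' : ∀ x, HasDerivAt α' (α'' x) x)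
    (β : ℝ → ℝ) (u v : ℝ) :
    HasDerivAt (fun x => meanCurv α β x v)
      (meanCurvDerivNum (α u) (α' u) (α'' u) (β v) (deriv β v) /
        (2 * (1 + α u ^ 2 + β v ^ 2) ^ ((5 : ℝ) / 2))) u := by
  have hderiv : deriv α = α' := funext fun x => (hα x).deriv
  set b := β v
  set b₁ := deriv β v
  have hW : 0 < 1 + α u ^ 2 + b ^ 2 := by positivity
  have hfun : (fun x => meanCurv α β x v) = fun x =>
      ((1 + b ^ 2) * α' x + (1 + α x ^ 2) * b₁) / (2 * (1 + α x ^ 2 + b ^ 2) ^ ((3 : ℝ) / 2)) := by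
    ext x; simp only [meanCurv, hderiv, b, b₁]
  have hnum := ((hα' u).const_mul (1 + b ^ 2)).fun_add
    (((hα u).fun_pow 2).const_add 1 |>.mul_const b₁)
  have hden := ((((hα u).fun_pow 2).const_add 1).add_const (b ^ 2)).rpow_const (p := (3 : ℝ) / 2)
    (Or.inl hW.ne') |>.const_mul 2
  rw [hfun]
  refine (hnum.div hden (by positivity)).congr_deriv ?_
  set W := 1 + α u ^ 2 + b ^ 2
  set s := W ^ ((1 : ℝ) / 2)
  have hs : 0 < s := by positivity
  have h32 : W ^ ((3 : ℝ) / 2) = W * s := by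
    rw [show (3 : ℝ) / 2 = 1 + 1 / 2 by norm_num, Real.rpow_add hW, Real.rpow_one]
  have h52 : W ^ ((5 : ℝ) / 2) = W ^ 2 * s := by
    rw [show (5 : ℝ) / 2 = 2 + 1 / 2 by norm_num, Real.rpow_add hW, Real.rpow_two]
  simp only [Nat.cast_ofNat, show (3 : ℝ) / 2 - 1 = 1 / 2 by norm_num, h32, h52, meanCurvDerivNum]
  field_simp
  ring

lemma hasDerivAt_gaussCurv (hα : ∀ x, HasDerivAt α (α' x) x) (hα' : ∀ x, HasDerivAt α' (α'' x) x)
    (β : ℝ → ℝ) (u v : ℝ) :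
    HasDerivAt (fun x => gaussCurv α β x v)
      (gaussCurvDerivNum (α u) (α' u) (α'' u) (β v) (deriv β v) /
        (1 + α u ^ 2 + β v ^ 2) ^ 3) u := by
  have hderiv : deriv α = α' := funext fun x => (hα x).deriv
  set b := β v
  set b₁ := deriv β v
  have hfun : (fun x => gaussCurv α β x v) = fun x => α' x * b₁ / (1 + α x ^ 2 + b ^ 2) ^ 2 := by
    ext x; simp only [gaussCurv, hderiv, b, b₁]
  have hden := (((hα u).fun_pow 2).const_add 1).add_const (b ^ 2) |>.fun_pow 2
  rw [hfun]
  refine (((hα' u).mul_const b₁).div hden (by positivity)).congr_deriv ?_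
  simp only [Nat.cast_ofNat, gaussCurvDerivNum]
  field_simp
  ring

variable {β β' β'' : ℝ → ℝ}

lemma jacobianHK_eq_zero_iff (hα : ∀ x, HasDerivAt α (α' x) x)
    (hα' : ∀ x, HasDerivAt α' (α'' x) x) (hβ : ∀ y, HasDerivAt β (β' y) y)
    (hβ' : ∀ y, HasDerivAt β' (β'' y) y) (u v : ℝ) :
    jacobianHK α β u v = 0 ↔
      weingartenNum (α u) (α' u) (α'' u) (β v) (β' v) (β'' v) = 0 := by
  have hH : (fun y => meanCurv α β u y) = fun y => meanCurv β α y u :=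
    funext fun y => meanCurv_comm α β u y
  have hK : (fun y => gaussCurv α β u y) = fun y => gaussCurv β α y u :=
    funext fun y => gaussCurv_comm α β u y
  rw [jacobianHK, hH, hK, (hasDerivAt_meanCurv hα hα' β u v).deriv,
    (hasDerivAt_meanCurv hβ hβ' α v u).deriv, (hasDerivAt_gaussCurv hα hα' β u v).deriv,
    (hasDerivAt_gaussCurv hβ hβ' α v u).deriv, (hα u).deriv, (hβ v).deriv,
    add_right_comm 1 (β v ^ 2), div_mul_div_comm, div_mul_div_comm, div_sub_div_same,
    div_eq_zero_iff, or_iff_left (by positivity), weingartenNum]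

end Derivatives

namespace Polynomial

variable {R : Type*} [CommRing R]

def HasTopCoeff (p : R[X]) (n : ℕ) (a : R) : Prop :=
  p.natDegree ≤ n ∧ p.coeff n = a

namespace HasTopCoeff

variable {p q : R[X]} {m n : ℕ} {a b : R}

lemma congr (h : HasTopCoeff p m a) (hm : m = n) (ha : a = b) : HasTopCoeff p n b :=
  hm ▸ ha ▸ h

lemma of_natDegree_le (h : p.natDegree ≤ n) : HasTopCoeff p n (p.coeff n) :=
  ⟨h, rfl⟩

lemma zero_of_lt (h : HasTopCoeff p m a) (hmn : m < n) : HasTopCoeff p n 0 :=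
  ⟨h.1.trans hmn.le, coeff_eq_zero_of_natDegree_lt (h.1.trans_lt hmn)⟩

protected lemma C (r : R) : HasTopCoeff (C r) 0 r :=
  ⟨(natDegree_C r).le, coeff_C_zero⟩

protected lemma one : HasTopCoeff (1 : R[X]) 0 1 :=
  ⟨natDegree_one.le, coeff_one_zero⟩

protected lemma ofNat (k : ℕ) [k.AtLeastTwo] : HasTopCoeff (ofNat(k) : R[X]) 0 ofNat(k) :=
  ⟨(natDegree_ofNat k).le, coeff_ofNat_zero k⟩

protected lemma add (hp : HasTopCoeff p n a) (hq : HasTopCoeff q n b) :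
    HasTopCoeff (p + q) n (a + b) :=
  ⟨natDegree_add_le_of_degree_le hp.1 hq.1, by rw [coeff_add, hp.2, hq.2]⟩

protected lemma sub (hp : HasTopCoeff p n a) (hq : HasTopCoeff q n b) :
    HasTopCoeff (p - q) n (a - b) :=
  ⟨(natDegree_sub_le_of_le hp.1 hq.1).trans (max_self n).le, by rw [coeff_sub, hp.2, hq.2]⟩

protected lemma mul (hp : HasTopCoeff p m a) (hq : HasTopCoeff q n b) :
    HasTopCoeff (p * q) (m + n) (a * b) :=
  ⟨natDegree_mul_le_of_le hp.1 hq.1,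
    by rw [coeff_mul_add_eq_of_natDegree_le hp.1 hq.1, hp.2, hq.2]⟩

protected lemma pow (hp : HasTopCoeff p n a) (k : ℕ) : HasTopCoeff (p ^ k) (k * n) (a ^ k) :=
  ⟨natDegree_pow_le_of_le k hp.1, by rw [coeff_pow_of_natDegree_le hp.1, hp.2]⟩

protected lemma derivative (h : HasTopCoeff p (n + 1) a) :
    HasTopCoeff (derivative p) n (a * (n + 1)) :=
  ⟨(natDegree_derivative_le p).trans (by have := h.1; omega), by rw [coeff_derivative, h.2]⟩

lemma derivative_mul (hp : HasTopCoeff p m a) (hq : HasTopCoeff q n b) :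
    HasTopCoeff (derivative p * q) (m + n - 1) (m * a * b) := by
  rcases m with _ | m
  · rw [derivative_of_natDegree_zero (Nat.le_zero.1 hp.1), zero_mul]
    exact ⟨natDegree_zero.trans_le (Nat.zero_le _), by simp⟩
  · exact (hp.derivative.mul hq).congr (by omega) (by push_cast; ring)

end HasTopCoeff

variable {A : R[X]} {k : ℕ} {c : R}

lemma hasTopCoeff_derivative_derivative_of_le (hA : HasTopCoeff A (k + 1) c) {n : ℕ}
    (hn : k ≤ n) :
    HasTopCoeff (derivative (derivative A)) n 0 :=
  ((hA.derivative.zero_of_lt (by omega : k < n + 1)).derivative).congr rfl (zero_mul _)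

lemma hasTopCoeff_one_add_sq_add_C_sq (hA : HasTopCoeff A (k + 1) c) (b : R) :
    HasTopCoeff (1 + A ^ 2 + C b ^ 2) (2 * k + 2) (c ^ 2) :=
  (((HasTopCoeff.one.zero_of_lt (by omega)).add (hA.pow 2)).add
    ((HasTopCoeff.C b).pow 2 |>.zero_of_lt (by omega))).congr (by ring) (by ring)

lemma hasTopCoeff_meanCurvDerivNum_left (hA : HasTopCoeff A (k + 1) c) (b b₁ : R) :
    HasTopCoeff (meanCurvDerivNum A (derivative A) (derivative (derivative A)) (C b) (C b₁))
      (4 * k + 3) (-(k + 1) * c ^ 4 * b₁) := by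
  have hW := hasTopCoeff_one_add_sq_add_C_sq hA b
  have hN : HasTopCoeff ((1 + C b ^ 2) * derivative A + (1 + A ^ 2) * C b₁) (2 * k + 2)
      (c ^ 2 * b₁) :=
    ((((HasTopCoeff.one.add ((HasTopCoeff.C b).pow 2)).mul hA.derivative).zero_of_lt
      (by omega)).add (((HasTopCoeff.one.zero_of_lt (by omega)).add (hA.pow 2)).mul
        (HasTopCoeff.C b₁) |>.congr (by ring) rfl)).congr rfl (by ring)
  have hM : HasTopCoeff ((1 + C b ^ 2) * derivative (derivative A) + 2 * A * derivative A * C b₁)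
      (2 * k + 1) (2 * (k + 1) * c ^ 2 * b₁) :=
    ((((HasTopCoeff.one.add ((HasTopCoeff.C b).pow 2)).mul
      (hasTopCoeff_derivative_derivative_of_le hA (n := 2 * k + 1) (by omega))).congr
        (by ring) rfl).add
      ((((HasTopCoeff.ofNat 2).mul hA).mul hA.derivative).mul (HasTopCoeff.C b₁)
        |>.congr (by ring) rfl)).congr rfl (by ring)
  have hT : HasTopCoeff
      (3 * A * derivative A * ((1 + C b ^ 2) * derivative A + (1 + A ^ 2) * C b₁))
      (4 * k + 3) (3 * (k + 1) * c ^ 4 * b₁) :=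
    ((((HasTopCoeff.ofNat 3).mul hA).mul hA.derivative).mul hN).congr (by ring) (by ring)
  exact (((hM.mul hW).congr (by ring) rfl).sub hT).congr rfl (by ring)

lemma hasTopCoeff_meanCurvDerivNum_right (hA : HasTopCoeff A (k + 1) c) (b b₁ b₂ : R) :
    HasTopCoeff (meanCurvDerivNum (C b) (C b₁) (C b₂) A (derivative A)) (4 * k + 4)
      (c ^ 4 * b₂) := by
  have hW : HasTopCoeff (1 + C b ^ 2 + A ^ 2) (2 * k + 2) (c ^ 2) := by
    simpa only [add_right_comm] using hasTopCoeff_one_add_sq_add_C_sq hA b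
  have hA2 : HasTopCoeff (1 + A ^ 2) (2 * k + 2) (c ^ 2) :=
    ((HasTopCoeff.one.zero_of_lt (by omega)).add (hA.pow 2)).congr (by ring) (by ring)
  have hM : HasTopCoeff ((1 + A ^ 2) * C b₂ + 2 * C b * C b₁ * derivative A) (2 * k + 2)
      (c ^ 2 * b₂) :=
    ((hA2.mul (HasTopCoeff.C b₂)).add
      (((((HasTopCoeff.ofNat 2).mul (HasTopCoeff.C b)).mul (HasTopCoeff.C b₁)).mul
        hA.derivative).zero_of_lt (by omega))).congr rfl (by ring)
  have hN : HasTopCoeff ((1 + A ^ 2) * C b₁ + (1 + C b ^ 2) * derivative A) (2 * k + 2)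
      (c ^ 2 * b₁) :=
    ((hA2.mul (HasTopCoeff.C b₁)).add
      (((HasTopCoeff.one.add ((HasTopCoeff.C b).pow 2)).mul hA.derivative).zero_of_lt
        (by omega))).congr rfl (by ring)
  exact (((hM.mul hW).congr (by ring) rfl).sub
    ((((HasTopCoeff.ofNat 3).mul (HasTopCoeff.C b)).mul (HasTopCoeff.C b₁)).mul hN
      |>.zero_of_lt (by omega))).congr rfl (by ring)

lemma hasTopCoeff_gaussCurvDerivNum_left (hA : HasTopCoeff A (k + 1) c) (b b₁ : R) :
    HasTopCoeff (gaussCurvDerivNum A (derivative A) (derivative (derivative A)) (C b) (C b₁))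
      (3 * k + 1) (-(k + 1) * (3 * k + 4) * c ^ 3 * b₁) :=
  ((HasTopCoeff.C b₁).mul
    ((hA.derivative.derivative_mul (hasTopCoeff_one_add_sq_add_C_sq hA b)).sub
      ((((HasTopCoeff.ofNat 4).mul hA).mul (hA.derivative.pow 2)).congr (by omega) rfl))).congr
    (by omega) (by ring)

lemma hasTopCoeff_gaussCurvDerivNum_right (hA : HasTopCoeff A (k + 1) c) (b b₁ b₂ : R) :
    HasTopCoeff (gaussCurvDerivNum (C b) (C b₁) (C b₂) A (derivative A)) (3 * k + 2)
      ((k + 1) * c ^ 3 * b₂) := by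
  have hW : HasTopCoeff (1 + C b ^ 2 + A ^ 2) (2 * k + 2) (c ^ 2) := by
    simpa only [add_right_comm] using hasTopCoeff_one_add_sq_add_C_sq hA b
  exact (hA.derivative.mul (((HasTopCoeff.C b₂).mul hW).sub
    ((((HasTopCoeff.ofNat 4).mul (HasTopCoeff.C b)).mul ((HasTopCoeff.C b₁).pow 2)).zero_of_lt
      (by omega)))).congr (by omega) (by ring)

lemma hasTopCoeff_weingartenNum (hA : HasTopCoeff A (k + 1) c) (b b₁ b₂ : R) :
    HasTopCoeff (weingartenNum A (derivative A) (derivative (derivative A)) (C b) (C b₁) (C b₂))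
      (7 * k + 5) ((k + 1) * (2 * k + 3) * c ^ 7 * b₁ * b₂) :=
  ((((hasTopCoeff_meanCurvDerivNum_left hA b b₁).mul
      (hasTopCoeff_gaussCurvDerivNum_right hA b b₁ b₂)).congr (by omega) rfl).sub
    (((hasTopCoeff_meanCurvDerivNum_right hA b b₁ b₂).mul
      (hasTopCoeff_gaussCurvDerivNum_left hA b b₁)).congr (by omega) rfl)).congr rfl (by ring)

end Polynomial

section TranslationSurface

variable {R : Type*} [CommRing R]

noncomputable def translationWeingartenNum (f g : R[X]) (u v : R) : R :=
  weingartenNum ((derivative f).eval u) ((derivative (derivative f)).eval u)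
    ((derivative (derivative (derivative f))).eval u) ((derivative g).eval v)
    ((derivative (derivative g)).eval v) ((derivative (derivative (derivative g))).eval v)

lemma translationWeingartenNum_swap (f g : R[X]) (u v : R) :
    translationWeingartenNum g f v u = -translationWeingartenNum f g u v :=
  weingartenNum_swap _ _ _ _ _ _

lemma translationWeingartenNum_eq_zero_of_natDegree_le_one {f : R[X]} (hf : f.natDegree ≤ 1)
    (g : R[X]) (u v : R) : translationWeingartenNum f g u v = 0 := by
  have hf₂ : derivative (derivative f) = 0 :=
    derivative_of_natDegree_zero (Nat.le_zero.1 ((natDegree_derivative_le f).trans (by omega)))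
  simp only [translationWeingartenNum, hf₂, derivative_zero, eval_zero,
    weingartenNum_of_linear_left]

lemma derivative_vertex (a u₀ c : R) :
    derivative (C a * (X - C u₀) ^ 2 + C c) = C (2 * a) * (X - C u₀) := by
  simp only [derivative_add, derivative_C_mul, derivative_sq, derivative_sub, derivative_X,
    derivative_C, sub_zero, add_zero, mul_one, map_mul]
  ring

lemma translationWeingartenNum_vertex (a u₀ c₁ b v₀ c₂ u v : R) :
    translationWeingartenNum (C a * (X - C u₀) ^ 2 + C c₁) (C b * (X - C v₀) ^ 2 + C c₂) u v =
      weingartenNum (2 * a * (u - u₀)) (2 * a) 0 (2 * b * (v - v₀)) (2 * b) 0 := by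
  rw [translationWeingartenNum, derivative_vertex, derivative_vertex]
  simp

variable {K : Type*} [Field K] [CharZero K]

lemma exists_eq_vertex {f : K[X]} (hf : f.natDegree = 2) :
    ∃ u₀ c, f = C f.leadingCoeff * (X - C u₀) ^ 2 + C c := by
  have ha : f.coeff 2 ≠ 0 := by
    rw [← hf]; exact leadingCoeff_ne_zero.2 (by rintro rfl; simp at hf)
  refine ⟨-f.coeff 1 / (2 * f.coeff 2), f.coeff 0 - f.coeff 1 ^ 2 / (4 * f.coeff 2), ?_⟩
  refine Polynomial.funext fun u => ?_
  rw [eval_eq_sum_range, hf, leadingCoeff, hf]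
  simp only [Finset.sum_range_succ, Finset.range_one, Finset.sum_singleton, pow_zero, pow_one,
    mul_one, eval_add, eval_mul, eval_C, eval_pow, eval_sub, eval_X]
  field_simp
  ring

lemma derivative_mul_derivative_eq_zero_of_translationWeingartenNum {f g : K[X]}
    (hf : 2 ≤ f.natDegree) (h : ∀ u v, translationWeingartenNum f g u v = 0) :
    derivative (derivative g) * derivative (derivative (derivative g)) = 0 := by
  obtain ⟨k, hk⟩ : ∃ k, f.natDegree = k + 2 := ⟨f.natDegree - 2, by omega⟩
  have hA := (HasTopCoeff.of_natDegree_le hk.le).derivative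
  have hc : f.coeff (k + 2) * ((k + 1 : ℕ) + 1 : K) ≠ 0 := by
    refine mul_ne_zero ?_ (by norm_cast)
    rw [← hk]; exact leadingCoeff_ne_zero.2 (by rintro rfl; simp at hk)
  refine Polynomial.funext fun v => ?_
  have hQ : weingartenNum (derivative f) (derivative (derivative f))
      (derivative (derivative (derivative f))) (C ((derivative g).eval v))
      (C ((derivative (derivative g)).eval v))
      (C ((derivative (derivative (derivative g))).eval v)) = 0 :=
    Polynomial.funext fun u => by
      rw [← coe_evalRingHom, map_weingartenNum]
      simp only [coe_evalRingHom, eval_C, eval_zero]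
      exact h u v
  have htop := (hasTopCoeff_weingartenNum hA ((derivative g).eval v)
    ((derivative (derivative g)).eval v) ((derivative (derivative (derivative g))).eval v)).2
  rw [hQ, coeff_zero, eq_comm, mul_assoc] at htop
  have hne : ((k : K) + 1) * (2 * k + 3) * (f.coeff (k + 2) * ((k + 1 : ℕ) + 1 : K)) ^ 7 ≠ 0 :=
    mul_ne_zero (mul_ne_zero (by norm_cast) (by norm_cast)) (pow_ne_zero _ hc)
  rw [eval_mul, eval_zero]
  exact (mul_eq_zero.1 htop).resolve_left hne

lemma natDegree_le_two_of_translationWeingartenNum {f g : K[X]}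
    (hf : 2 ≤ f.natDegree) (hg : 2 ≤ g.natDegree)
    (h : ∀ u v, translationWeingartenNum f g u v = 0) : g.natDegree ≤ 2 := by
  have hg₂ : derivative (derivative g) ≠ 0 := by
    rw [Ne, derivative_eq_zero, natDegree_derivative]; omega
  have hg₃ := derivative_eq_zero.1 ((mul_eq_zero.1
    (derivative_mul_derivative_eq_zero_of_translationWeingartenNum hf h)).resolve_left hg₂)
  rw [natDegree_derivative, natDegree_derivative] at hg₃
  omega

end TranslationSurface

lemma jacobianHK_eq_zero_iff_translationWeingartenNum (f g : ℝ[X]) (u v : ℝ) :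
    jacobianHK (fun x => f.derivative.eval x) (fun y => g.derivative.eval y) u v = 0 ↔
      translationWeingartenNum f g u v = 0 :=
  jacobianHK_eq_zero_iff (fun x => (derivative f).hasDerivAt x)
    (fun x => (derivative (derivative f)).hasDerivAt x) (fun y => (derivative g).hasDerivAt y)
    (fun y => (derivative (derivative g)).hasDerivAt y) u v

lemma exists_paraboloid_of_translationWeingartenNum {f g : ℝ[X]} (hf : f.natDegree = 2)
    (hg : g.natDegree = 2) (h : ∀ u v, translationWeingartenNum f g u v = 0) :
    ∃ a u₀ v₀ c₁ c₂ : ℝ, a ≠ 0 ∧ (∀ u, f.eval u = a * (u - u₀) ^ 2 + c₁) ∧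
      (∀ v, g.eval v = a * (v - v₀) ^ 2 + c₂) := by
  obtain ⟨u₀, c₁, hfv⟩ := exists_eq_vertex hf
  obtain ⟨v₀, c₂, hgv⟩ := exists_eq_vertex hg
  have ha : f.leadingCoeff ≠ 0 := leadingCoeff_ne_zero.2 (by rintro rfl; simp at hf)
  have hb : g.leadingCoeff ≠ 0 := leadingCoeff_ne_zero.2 (by rintro rfl; simp at hg)
  have hab : f.leadingCoeff = g.leadingCoeff := by
    have h₁ := h (u₀ + 1) (v₀ + 1)
    rw [hfv, hgv, translationWeingartenNum_vertex, weingartenNum_of_quadratic,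
      add_sub_cancel_left, add_sub_cancel_left, mul_one, mul_one] at h₁
    have := (mul_eq_zero.1 h₁).resolve_left (by positivity)
    linarith
  exact ⟨f.leadingCoeff, u₀, v₀, c₁, c₂, ha, fun u => by simpa using congrArg (eval u) hfv,
    fun v => by simpa [hab] using congrArg (eval v) hgv⟩

/-- A polynomial translation surface `r(u,v) = (u, v, f(u) + g(v))` is a Weingarten surface
iff it is a cylinder (`f` or `g` has degree `≤ 1`) or, up to translation, a paraboloid of
revolution `z = a(u−u₀)² + a(v−v₀)²` with `a ≠ 0`. -/
theorem stmt_10 (f g : Polynomial ℝ) :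
    (∀ u v : ℝ,
        jacobianHK (fun x => f.derivative.eval x) (fun y => g.derivative.eval y) u v = 0) ↔
      (f.natDegree ≤ 1 ∨ g.natDegree ≤ 1 ∨
        ∃ (a u₀ v₀ c₁ c₂ : ℝ), a ≠ 0 ∧
          (∀ u : ℝ, f.eval u = a * (u - u₀) ^ 2 + c₁) ∧
          (∀ v : ℝ, g.eval v = a * (v - v₀) ^ 2 + c₂)) := by
  simp only [jacobianHK_eq_zero_iff_translationWeingartenNum]
  constructor
  · intro h
    rcases le_or_gt f.natDegree 1 with hf | hf
    · exact Or.inl hf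
    rcases le_or_gt g.natDegree 1 with hg | hg
    · exact Or.inr (Or.inl hg)
    have hgf : ∀ v u, translationWeingartenNum g f v u = 0 := fun v u => by
      rw [translationWeingartenNum_swap, h u v, neg_zero]
    exact Or.inr (Or.inr (exists_paraboloid_of_translationWeingartenNum
      (le_antisymm (natDegree_le_two_of_translationWeingartenNum hg hf hgf) hf)
      (le_antisymm (natDegree_le_two_of_translationWeingartenNum hf hg h) hg) h))
  · rintro (hf | hg | ⟨a, u₀, v₀, c₁, c₂, -, hf, hg⟩) u v
    · exact translationWeingartenNum_eq_zero_of_natDegree_le_one hf g u v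
    · rw [← neg_eq_zero, ← translationWeingartenNum_swap]
      exact translationWeingartenNum_eq_zero_of_natDegree_le_one hg f v u
    · rw [show f = C a * (X - C u₀) ^ 2 + C c₁ from Polynomial.funext (by simpa using hf),
        show g = C a * (X - C v₀) ^ 2 + C c₂ from Polynomial.funext (by simpa using hg),
        translationWeingartenNum_vertex, weingartenNum_of_quadratic, sub_self, mul_zero]
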